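/- Let M̃ and Q̃ be integers with 0 ≤ Q̃ ≤ M̃ and M̃ ≥ 1, and let w_0, …, w_{M̃−1} be centered square-integrable complex random variables satisfying E[w_{l₁} · conj(w_{l₂})] = 0 for l₁ ≠ l₂, with E[|w_l|²] = 2σ_w² for 0 ≤ l < Q̃ and E[|w_l|²] = σ_w² for Q̃ ≤ l < M̃. Define W[m] = Σ_{l=0}^{M̃−1} w_l e^{−j2πlm/M̃}/√M̃. Then for every 0 ≤ m < M̃, E[|W[m]|²] = (1 + Q̃/M̃) σ_w². -/

import Mathlib

open MeasureTheory Complex ComplexConjugate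
open scoped Real BigOperators

/-! Uncorrelatedness kills the cross terms of `‖∑ l, w l * c l‖²` in expectation, leaving
`∑ l, ‖c l‖² E‖w l‖²`. Every unitary DFT coefficient has `‖c l‖² = 1/M̃`, and the second
moments add up to `(M̃ + Q̃) σ_w²`. -/

section Uncorrelated

variable {Ω ι : Type*} [MeasurableSpace Ω] {P : Measure Ω}

lemma integrable_mul_conj_of_memLp {f g : Ω → ℂ} (hf : MemLp f 2 P) (hg : MemLp g 2 P) :
    Integrable (fun ω => f ω * conj (g ω)) P :=
  hf.integrable_mul hg.star

lemma integral_norm_sq_sum_mul_of_uncorrelated [Fintype ι] (w : ι → Ω → ℂ) (c : ι → ℂ)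
    (hL2 : ∀ l, MemLp (w l) 2 P)
    (huncorr : ∀ l₁ l₂, l₁ ≠ l₂ → ∫ ω, w l₁ ω * conj (w l₂ ω) ∂P = 0) :
    ∫ ω, ‖∑ l, w l ω * c l‖ ^ 2 ∂P = ∑ l, ‖c l‖ ^ 2 * ∫ ω, ‖w l ω‖ ^ 2 ∂P := by
  have hexpand : ∀ ω, ((‖∑ l, w l ω * c l‖ ^ 2 : ℝ) : ℂ) =
      ∑ l₁, ∑ l₂, c l₁ * conj (c l₂) * (w l₁ ω * conj (w l₂ ω)) := by
    intro ω
    rw [ofReal_pow, ← mul_conj', map_sum, Finset.sum_mul_sum]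
    simp only [map_mul]
    exact Finset.sum_congr rfl fun _ _ => Finset.sum_congr rfl fun _ _ => by ring
  have hint : ∀ l₁ l₂, Integrable (fun ω => c l₁ * conj (c l₂) * (w l₁ ω * conj (w l₂ ω))) P :=
    fun l₁ l₂ => (integrable_mul_conj_of_memLp (hL2 l₁) (hL2 l₂)).const_mul _
  apply Complex.ofReal_injective
  calc ((∫ ω, ‖∑ l, w l ω * c l‖ ^ 2 ∂P : ℝ) : ℂ)
      = ∑ l₁, ∑ l₂, c l₁ * conj (c l₂) * ∫ ω, w l₁ ω * conj (w l₂ ω) ∂P := by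
        rw [← integral_complex_ofReal]
        simp_rw [hexpand]
        rw [integral_finsetSum _ fun l₁ _ => integrable_finsetSum _ fun l₂ _ => hint l₁ l₂]
        simp_rw [integral_finsetSum _ fun l₂ _ => hint _ l₂, integral_const_mul]
    _ = ∑ l, c l * conj (c l) * ∫ ω, w l ω * conj (w l ω) ∂P := by
        refine Finset.sum_congr rfl fun l₁ _ =>
          Finset.sum_eq_single l₁ (fun l₂ _ h => ?_) (by simp)
        rw [huncorr l₁ l₂ (Ne.symm h), mul_zero]
    _ = ((∑ l, ‖c l‖ ^ 2 * ∫ ω, ‖w l ω‖ ^ 2 ∂P : ℝ) : ℂ) := by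
        simp only [mul_conj', ← ofReal_pow, integral_complex_ofReal]
        push_cast; rfl

end Uncorrelated

lemma sum_fin_eq_of_lt_of_le {M : Type*} [AddCommMonoid M] {n q : ℕ} (hqn : q ≤ n)
    (f : Fin n → M) (a b : M) (hlt : ∀ l : Fin n, (l : ℕ) < q → f l = a)
    (hle : ∀ l : Fin n, q ≤ (l : ℕ) → f l = b) :
    ∑ l, f l = q • a + (n - q) • b := by
  obtain ⟨k, rfl⟩ := Nat.exists_eq_add_of_le hqn
  rw [Fin.sum_univ_add, Finset.sum_congr rfl fun i _ => hlt _ i.isLt,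
    Finset.sum_congr rfl fun i _ => hle (Fin.natAdd q i) (Nat.le_add_right q i)]
  simp

lemma norm_sq_unitary_dft_twiddle (n : ℕ) (x : ℝ) :
    ‖Complex.exp (-(Complex.I * x)) / Real.sqrt n‖ ^ 2 = 1 / n := by
  rw [norm_div, Complex.norm_exp]
  simp

theorem vcp_noise_dft_variance_general
    {Ω : Type*} [MeasurableSpace Ω] (P : Measure Ω)
    (Mt Qt : ℕ) (hQM : Qt ≤ Mt) (σw : ℝ)
    (w : Fin Mt → Ω → ℂ)
    (hL2 : ∀ l, MemLp (w l) 2 P)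
    (huncorr : ∀ l₁ l₂ : Fin Mt, l₁ ≠ l₂ → ∫ ω, w l₁ ω * conj (w l₂ ω) ∂P = 0)
    (hvar₁ : ∀ l : Fin Mt, (l : ℕ) < Qt → ∫ ω, (‖w l ω‖ : ℝ) ^ 2 ∂P = 2 * σw ^ 2)
    (hvar₂ : ∀ l : Fin Mt, Qt ≤ (l : ℕ) → ∫ ω, (‖w l ω‖ : ℝ) ^ 2 ∂P = σw ^ 2)
    (W : Fin Mt → Ω → ℂ)
    (hW : ∀ m ω, W m ω =
      ∑ l : Fin Mt, w l ω * Complex.exp (-(Complex.I * 2 * π * l * m / Mt)) / Real.sqrt Mt) :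
    ∀ m : Fin Mt, ∫ ω, (‖W m ω‖ : ℝ) ^ 2 ∂P = (1 + (Qt : ℝ) / Mt) * σw ^ 2 := by
  intro m
  have hMt : (0 : ℝ) < Mt := Nat.cast_pos.mpr m.pos
  set c : Fin Mt → ℂ := fun l =>
    Complex.exp (-(Complex.I * ((2 * π * l * m / Mt : ℝ) : ℂ))) / Real.sqrt Mt
  have hWc : ∀ ω, W m ω = ∑ l, w l ω * c l := fun ω => by
    rw [hW]
    refine Finset.sum_congr rfl fun l _ => ?_
    simp only [c]
    push_cast
    ring_nf
  simp_rw [hWc]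
  rw [integral_norm_sq_sum_mul_of_uncorrelated w c hL2 huncorr]
  simp only [c, norm_sq_unitary_dft_twiddle, ← Finset.mul_sum]
  rw [sum_fin_eq_of_lt_of_le hQM _ _ _ hvar₁ hvar₂, nsmul_eq_mul, nsmul_eq_mul,
    Nat.cast_sub hQM]
  field_simp
  ring

/-- Frequency-domain noise power after VCP folding: if the first `Q̃` time-domain noise
samples have variance `2σ_w²` and the remaining ones variance `σ_w²` (all centered and
mutually uncorrelated), then every unitary-DFT coefficient has second moment
`(1 + Q̃/M̃) σ_w²`. -/
theorem vcp_noise_dft_variance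
    {Ω : Type*} [MeasurableSpace Ω] (P : Measure Ω) [IsProbabilityMeasure P]
    (Mt Qt : ℕ) (hMt : 1 ≤ Mt) (hQM : Qt ≤ Mt) (σw : ℝ)
    (w : Fin Mt → Ω → ℂ)
    (hL2 : ∀ l, MemLp (w l) 2 P)
    (hcent : ∀ l, ∫ ω, w l ω ∂P = 0)
    (huncorr : ∀ l₁ l₂ : Fin Mt, l₁ ≠ l₂ → ∫ ω, w l₁ ω * conj (w l₂ ω) ∂P = 0)
    (hvar₁ : ∀ l : Fin Mt, (l : ℕ) < Qt → ∫ ω, (‖w l ω‖ : ℝ) ^ 2 ∂P = 2 * σw ^ 2)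
    (hvar₂ : ∀ l : Fin Mt, Qt ≤ (l : ℕ) → ∫ ω, (‖w l ω‖ : ℝ) ^ 2 ∂P = σw ^ 2)
    (W : Fin Mt → Ω → ℂ)
    (hW : ∀ m ω, W m ω =
      ∑ l : Fin Mt, w l ω * Complex.exp (-(Complex.I * 2 * π * l * m / Mt)) / Real.sqrt Mt) :
    ∀ m : Fin Mt, ∫ ω, (‖W m ω‖ : ℝ) ^ 2 ∂P = (1 + (Qt : ℝ) / Mt) * σw ^ 2 :=
  vcp_noise_dft_variance_general P Mt Qt hQM σw w hL2 huncorr hvar₁ hvar₂ W hW
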